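/- arXiv:2602.05701 — 2 statements merged into one kernel-verified Lean document; each statement's English description precedes it below -/
import Mathlib

section
/- Let δt, ρ_f, ν_f, ρ, C_P be positive real numbers and set α = min{ρ_f, ν_f·δt, ρ/δt, δt, 1/(2·δt·(C_P² + 1))}. Then for every (v, φ, η) ∈ U × W × W one has a_{δt}((v, φ, η), (v, φ, η)) ≥ α·(‖v‖² + ‖G_f v‖² + ‖φ‖² + ‖G_p φ‖² + ‖η‖² + ‖G_p η‖²). -/
open scoped RealInnerProductSpace

set_option maxHeartbeats 1000000 in
/-- Coercivity of the semi-discrete bilinear form `a_{δt}` of the coupled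
3D Stokes–2D plate system. -/
theorem semi_discrete_coercivity
    {U W Yf Yp : Type*}
    [NormedAddCommGroup U] [InnerProductSpace ℝ U]
    [NormedAddCommGroup W] [InnerProductSpace ℝ W]
    [NormedAddCommGroup Yf] [InnerProductSpace ℝ Yf]
    [NormedAddCommGroup Yp] [InnerProductSpace ℝ Yp]
    (Gf : U →ₗ[ℝ] Yf) (Gp : W →ₗ[ℝ] Yp)
    (δt ρf νf ρ CP : ℝ)
    (hδt : 0 < δt) (hρf : 0 < ρf) (hνf : 0 < νf) (hρ : 0 < ρ) (hCP : 0 < CP)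
    (hPF : ∀ φ : W, ‖φ‖ ≤ CP * ‖Gp φ‖)
    (a : (U × W × W) → (U × W × W) → ℝ)
    (ha : ∀ (u : U) (w z : W) (v : U) (φ η : W),
      a (u, w, z) (v, φ, η) =
        ρf * ⟪u, v⟫ + νf * δt * ⟪Gf u, Gf v⟫
        + (1 / δt) * ⟪w, η⟫ + (ρ / δt) * ⟪z, η⟫
        + δt * ⟪Gp z, Gp η⟫ - (1 / δt) * ⟪z, φ⟫
        + (1 / δt) * ⟪Gp w, Gp φ⟫) :
    ∀ (v : U) (φ η : W),
      a (v, φ, η) (v, φ, η) ≥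
        min ρf (min (νf * δt) (min (ρ / δt) (min δt (1 / (2 * δt * (CP ^ 2 + 1)))))) *
          (‖v‖ ^ 2 + ‖Gf v‖ ^ 2 + ‖φ‖ ^ 2 + ‖Gp φ‖ ^ 2 + ‖η‖ ^ 2 + ‖Gp η‖ ^ 2) := by

  intro v φ η
  rw [ha]
  rw [real_inner_comm φ η]
  have hv : ⟪v, v⟫ = ‖v‖ ^ 2 := real_inner_self_eq_norm_sq v
  have hgv : ⟪Gf v, Gf v⟫ = ‖Gf v‖ ^ 2 := real_inner_self_eq_norm_sq _
  have hη : ⟪η, η⟫ = ‖η‖ ^ 2 := real_inner_self_eq_norm_sq η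
  have hgη : ⟪Gp η, Gp η⟫ = ‖Gp η‖ ^ 2 := real_inner_self_eq_norm_sq _
  have hgφ : ⟪Gp φ, Gp φ⟫ = ‖Gp φ‖ ^ 2 := real_inner_self_eq_norm_sq _
  rw [hv, hgv, hη, hgη, hgφ]
  set α := min ρf (min (νf * δt) (min (ρ / δt) (min δt (1 / (2 * δt * (CP ^ 2 + 1)))))) with hαdef
  have hα1 : α ≤ ρf := min_le_left _ _
  have hα2 : α ≤ νf * δt := le_trans (min_le_right _ _) (min_le_left _ _)
  have hα3 : α ≤ ρ / δt := le_trans (min_le_right _ _)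
    (le_trans (min_le_right _ _) (min_le_left _ _))
  have hα4 : α ≤ δt := le_trans (min_le_right _ _)
    (le_trans (min_le_right _ _) (le_trans (min_le_right _ _) (min_le_left _ _)))
  have hα5 : α ≤ 1 / (2 * δt * (CP ^ 2 + 1)) := le_trans (min_le_right _ _)
    (le_trans (min_le_right _ _) (le_trans (min_le_right _ _) (min_le_right _ _)))
  have hCP1 : (0:ℝ) < CP ^ 2 + 1 := by positivity
  have hα0 : 0 ≤ α := le_min hρf.le (le_min (by positivity) (le_min (by positivity)
    (le_min hδt.le (by positivity))))
  have hpf : ‖φ‖ ^ 2 ≤ CP ^ 2 * ‖Gp φ‖ ^ 2 := by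
    nlinarith [hPF φ, norm_nonneg φ, norm_nonneg (Gp φ)]
  have hb1 : α * ‖v‖ ^ 2 ≤ ρf * ‖v‖ ^ 2 := by nlinarith [sq_nonneg ‖v‖]
  have hb2 : α * ‖Gf v‖ ^ 2 ≤ νf * δt * ‖Gf v‖ ^ 2 := by nlinarith [sq_nonneg ‖Gf v‖]
  have hb3 : α * ‖η‖ ^ 2 ≤ ρ / δt * ‖η‖ ^ 2 := by nlinarith [sq_nonneg ‖η‖]
  have hb4 : α * ‖Gp η‖ ^ 2 ≤ δt * ‖Gp η‖ ^ 2 := by nlinarith [sq_nonneg ‖Gp η‖]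
  have hb5 : α * (‖φ‖ ^ 2 + ‖Gp φ‖ ^ 2) ≤ 1 / δt * ‖Gp φ‖ ^ 2 := by
    have h2 : ‖φ‖ ^ 2 + ‖Gp φ‖ ^ 2 ≤ (CP ^ 2 + 1) * ‖Gp φ‖ ^ 2 := by ring_nf; linarith [hpf]
    have h3 : α * (‖φ‖ ^ 2 + ‖Gp φ‖ ^ 2) ≤ α * ((CP ^ 2 + 1) * ‖Gp φ‖ ^ 2) :=
      mul_le_mul_of_nonneg_left h2 hα0
    have h4 : α * ((CP ^ 2 + 1) * ‖Gp φ‖ ^ 2) ≤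
        1 / (2 * δt * (CP ^ 2 + 1)) * ((CP ^ 2 + 1) * ‖Gp φ‖ ^ 2) :=
      mul_le_mul_of_nonneg_right hα5 (by positivity)
    have h5 : 1 / (2 * δt * (CP ^ 2 + 1)) * ((CP ^ 2 + 1) * ‖Gp φ‖ ^ 2)
        = 1 / (2 * δt) * ‖Gp φ‖ ^ 2 := by
      field_simp
    have h6 : 1 / (2 * δt) * ‖Gp φ‖ ^ 2 ≤ 1 / δt * ‖Gp φ‖ ^ 2 := by
      have : 1 / (2 * δt) ≤ 1 / δt := by
        rw [div_le_div_iff₀ (by positivity) hδt]; nlinarith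
      nlinarith [sq_nonneg ‖Gp φ‖]
    linarith
  linarith
end

section
/- Let U and W be real normed spaces, U₀ ⊆ U a subspace, G and Q sets indexing multipliers and pressures, and for a fixed pair (q, g) let D : U → ℝ, C : U → ℝ, and E : W → ℝ be continuous linear functionals with the following properties, where N_q, N_g ≥ 0 and β*, β_f, β_s, K > 0: (i) there exists ṽ ∈ U₀ with ‖ṽ‖ = 1, D(ṽ) ≥ β*·N_q, and C(v₀) = 0 for every v₀ ∈ U₀; (ii) there exists v̂ ∈ U with ‖v̂‖ = 1, C(v̂) ≥ β_f·N_g, and D(v̂) ≥ −K·N_q; (iii) there exists φ̂ ∈ W with ‖φ̂‖ = 1 and E(φ̂) ≥ β_s·N_g. Then, setting v = v̂ + (1 + K/β*)·ṽ and φ = φ̂, one has D(v) + C(v) + E(φ) ≥ (min{β*, β_f + β_s}/(3 + K/β*)) · (‖v‖² + ‖φ‖²)^{1/2} · (N_q² + N_g²)^{1/2}. -/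
/-- Abstract combination argument at the heart of the discrete inf-sup theorem
for the coupled bilinear form of the fully discrete fluid–plate problem. -/
theorem discrete_infsup_combination
    {U W : Type*} [NormedAddCommGroup U] [NormedSpace ℝ U]
    [NormedAddCommGroup W] [NormedSpace ℝ W]
    (U₀ : Submodule ℝ U)
    (D C : U →L[ℝ] ℝ) (E : W →L[ℝ] ℝ)
    (Nq Ng βstar βf βs K : ℝ)
    (hNq : 0 ≤ Nq) (hNg : 0 ≤ Ng)
    (hβstar : 0 < βstar) (hβf : 0 < βf) (hβs : 0 < βs) (hK : 0 < K)
    (vt : U) (hvt_mem : vt ∈ U₀) (hvt_norm : ‖vt‖ = 1)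
    (hvt_D : D vt ≥ βstar * Nq)
    (hC_zero : ∀ v₀ ∈ U₀, C v₀ = 0)
    (vh : U) (hvh_norm : ‖vh‖ = 1)
    (hvh_C : C vh ≥ βf * Ng) (hvh_D : D vh ≥ -K * Nq)
    (ph : W) (hph_norm : ‖ph‖ = 1)
    (hph_E : E ph ≥ βs * Ng) :
    D (vh + (1 + K / βstar) • vt) + C (vh + (1 + K / βstar) • vt) + E ph ≥
      (min βstar (βf + βs) / (3 + K / βstar)) *
        Real.sqrt (‖vh + (1 + K / βstar) • vt‖ ^ 2 + ‖ph‖ ^ 2) *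
        Real.sqrt (Nq ^ 2 + Ng ^ 2) := by
  set α : ℝ := 1 + K / βstar with hα
  have hαpos : 0 < α := by positivity
  have hC0 : C vt = 0 := hC_zero vt hvt_mem
  have hmap : D (vh + α • vt) + C (vh + α • vt) + E ph
      = D vh + α * D vt + C vh + E ph := by
    simp only [map_add, map_smul, smul_eq_mul, hC0]
    ring
  have hm : 0 < min βstar (βf + βs) := lt_min hβstar (by linarith)
  have hαD : α * D vt ≥ α * (βstar * Nq) :=
    mul_le_mul_of_nonneg_left hvt_D hαpos.le
  have hαβ : α * (βstar * Nq) = (βstar + K) * Nq := by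
    field_simp [hα]
    rw [hα, add_mul, div_mul_cancel₀ K hβstar.ne']; ring
  have hLHS : D vh + α * D vt + C vh + E ph ≥ min βstar (βf + βs) * (Nq + Ng) := by
    have h1 : min βstar (βf + βs) ≤ βstar := min_le_left _ _
    have h2 : min βstar (βf + βs) ≤ βf + βs := min_le_right _ _
    nlinarith [mul_le_mul_of_nonneg_right h1 hNq, mul_le_mul_of_nonneg_right h2 hNg]
  have hnv : ‖vh + α • vt‖ ≤ 1 + α := by
    calc ‖vh + α • vt‖ ≤ ‖vh‖ + ‖α • vt‖ := norm_add_le _ _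
      _ = 1 + α := by
          rw [norm_smul, hvh_norm, hvt_norm, Real.norm_eq_abs, abs_of_pos hαpos]
          ring
  have hnvnn : 0 ≤ ‖vh + α • vt‖ := norm_nonneg _
  have hsq1 : Real.sqrt (‖vh + α • vt‖ ^ 2 + ‖ph‖ ^ 2) ≤ 3 + K / βstar := by
    rw [show (3 : ℝ) + K / βstar = 2 + α by rw [hα]; ring]
    rw [show Real.sqrt (‖vh + α • vt‖ ^ 2 + ‖ph‖ ^ 2)
        = Real.sqrt (‖vh + α • vt‖ ^ 2 + ‖ph‖ ^ 2) from rfl]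
    have h2 : Real.sqrt ((2 + α) ^ 2) = 2 + α := by
      rw [Real.sqrt_sq (by linarith)]
    rw [← h2]
    apply Real.sqrt_le_sqrt
    rw [hph_norm]
    nlinarith
  have hsq2 : Real.sqrt (Nq ^ 2 + Ng ^ 2) ≤ Nq + Ng := by
    rw [show Nq + Ng = Real.sqrt ((Nq + Ng) ^ 2) from
      (Real.sqrt_sq (by linarith)).symm]
    apply Real.sqrt_le_sqrt
    nlinarith
  have hsq1nn : 0 ≤ Real.sqrt (‖vh + α • vt‖ ^ 2 + ‖ph‖ ^ 2) := Real.sqrt_nonneg _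
  have hsq2nn : 0 ≤ Real.sqrt (Nq ^ 2 + Ng ^ 2) := Real.sqrt_nonneg _
  have hden : (0 : ℝ) < 3 + K / βstar := by positivity
  have hRHS : (min βstar (βf + βs) / (3 + K / βstar)) *
        Real.sqrt (‖vh + α • vt‖ ^ 2 + ‖ph‖ ^ 2) *
        Real.sqrt (Nq ^ 2 + Ng ^ 2) ≤ min βstar (βf + βs) * (Nq + Ng) := by
    have hstep : (min βstar (βf + βs) / (3 + K / βstar)) *
        Real.sqrt (‖vh + α • vt‖ ^ 2 + ‖ph‖ ^ 2) ≤ min βstar (βf + βs) := by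
      rw [div_mul_eq_mul_div, div_le_iff₀ hden]
      exact mul_le_mul_of_nonneg_left hsq1 hm.le
    calc (min βstar (βf + βs) / (3 + K / βstar)) *
          Real.sqrt (‖vh + α • vt‖ ^ 2 + ‖ph‖ ^ 2) *
          Real.sqrt (Nq ^ 2 + Ng ^ 2)
        ≤ min βstar (βf + βs) * Real.sqrt (Nq ^ 2 + Ng ^ 2) :=
          mul_le_mul_of_nonneg_right hstep hsq2nn
      _ ≤ min βstar (βf + βs) * (Nq + Ng) :=
          mul_le_mul_of_nonneg_left hsq2 hm.le
  rw [hmap]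
  exact le_trans hRHS hLHS
end
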